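/- arXiv:2505.01308 — 2 statements merged into one kernel-verified Lean document; each statement's English description precedes it below -/
import Mathlib

section
/- Suppose L̂ : ℝ → ℝ^{4×4} evolves by the natural adaptation law L̂' = (1/γ) L̂ S L̂ with γ > 0 and S(t) symmetric, and L is constant symmetric. Then d/dt D_F(L‖L̂) = (1/γ) tr(S (L̂ − L)). -/
/-! Along a differentiable curve `L̂` of invertible matrices, Jacobi's formula
`(log det L̂)' = tr(L̂⁻¹ L̂')` and `(L̂⁻¹)' = -L̂⁻¹ L̂' L̂⁻¹` give
`D_F(L‖L̂)' = tr(L̂⁻¹ L̂' L̂⁻¹ (L̂ − L))`. Under the natural adaptation law the conjugated velocity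
`L̂⁻¹ L̂' L̂⁻¹` is just `S / γ`. -/

open Matrix Filter Topology

attribute [local instance] Matrix.normedAddCommGroup Matrix.normedSpace

namespace Matrix

variable {n : Type*} [Fintype n] [DecidableEq n]

section CommRing

variable {R : Type*} [CommRing R]

theorem det_updateRow_eq_sum_mul_adjugate (A : Matrix n n R) (i : n) (v : n → R) :
    (A.updateRow i v).det = ∑ j, v j * adjugate A j i := by
  rw [← det_transpose, ← updateCol_transpose, ← cramer_apply, cramer_eq_adjugate_mulVec,
    ← adjugate_transpose]
  simp [mulVec, dotProduct, mul_comm]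

theorem sum_det_updateRow (A B : Matrix n n R) :
    ∑ i, (A.updateRow i (B i)).det = (adjugate A * B).trace := by
  simp only [det_updateRow_eq_sum_mul_adjugate, trace, diag, mul_apply]
  rw [Finset.sum_comm]
  simp only [mul_comm]

theorem adjugate_eq_det_smul_inv {A : Matrix n n R} (h : IsUnit A.det) :
    adjugate A = A.det • A⁻¹ :=
  calc adjugate A = adjugate A * (A * A⁻¹) := by rw [mul_nonsing_inv _ h, Matrix.mul_one]
    _ = A.det • A⁻¹ := by rw [← Matrix.mul_assoc, adjugate_mul, smul_mul, Matrix.one_mul]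

end CommRing

variable {𝕜 : Type*} [NontriviallyNormedField 𝕜]

noncomputable def detRowContinuousMultilinear :
    ContinuousMultilinearMap 𝕜 (fun _ : n => n → 𝕜) 𝕜 :=
  { detRowAlternating.toMultilinearMap with
    cont := continuous_id.matrix_det }

theorem hasFDerivAt_det [CompleteSpace 𝕜] (A : Matrix n n 𝕜) :
    HasFDerivAt det (LinearMap.toContinuousLinearMap
      ((traceLinearMap n 𝕜 𝕜).comp (LinearMap.mulLeft 𝕜 (adjugate A)))) A :=
  (detRowContinuousMultilinear.hasFDerivAt A).congr_fderiv <| ContinuousLinearMap.ext fun B =>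
    (ContinuousMultilinearMap.linearDeriv_apply _ _ _).trans (sum_det_updateRow A B)

end Matrix

section MatrixCurve

variable {𝕜 : Type*} [NontriviallyNormedField 𝕜] {n : Type*} [Fintype n] [DecidableEq n]
  {A : 𝕜 → Matrix n n 𝕜} {A' : Matrix n n 𝕜} {t : 𝕜}

theorem HasDerivAt.matrix_inv (hA : HasDerivAt A A' t) (ht : IsUnit (A t).det) :
    HasDerivAt (fun s => (A s)⁻¹) (-((A t)⁻¹ * A' * (A t)⁻¹)) t := by
  have hunit : ∀ᶠ s in 𝓝 t, IsUnit (A s).det :=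
    ((continuous_id.matrix_det.continuousAt.comp hA.continuousAt).eventually_ne
      ht.ne_zero).mono fun _ hs => hs.isUnit
  have hcont : ContinuousAt (fun s => (A s)⁻¹) t := by
    refine (continuousAt_matrix_inv (A t) ?_).comp hA.continuousAt
    simpa only [Ring.inverse_eq_inv'] using continuousAt_inv₀ ht.ne_zero
  have hslope : (fun s => -((A s)⁻¹ * slope A t s * (A t)⁻¹)) =ᶠ[𝓝[≠] t]
      slope (fun s => (A s)⁻¹) t := by
    filter_upwards [nhdsWithin_le_nhds hunit] with s hs
    have hdiff : (A s)⁻¹ - (A t)⁻¹ = -((A s)⁻¹ * (A s - A t) * (A t)⁻¹) := by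
      rw [Matrix.mul_sub, nonsing_inv_mul _ hs, Matrix.sub_mul, Matrix.one_mul, Matrix.mul_assoc,
        mul_nonsing_inv _ ht, Matrix.mul_one, neg_sub]
    rw [slope_def_module, slope_def_module, hdiff]
    simp only [smul_neg, mul_smul_comm, smul_mul_assoc]
  refine hasDerivAt_iff_tendsto_slope.mpr ?_
  exact ((((hcont.tendsto.mono_left nhdsWithin_le_nhds).mul hA.tendsto_slope).mul
    tendsto_const_nhds).neg).congr' hslope

variable [CompleteSpace 𝕜]

theorem HasDerivAt.matrix_det (hA : HasDerivAt A A' t) :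
    HasDerivAt (fun s => (A s).det) (adjugate (A t) * A').trace t :=
  (hasFDerivAt_det (A t)).comp_hasDerivAt t hA

theorem HasDerivAt.matrix_trace_mul_const (hA : HasDerivAt A A' t) (B : Matrix n n 𝕜) :
    HasDerivAt (fun s => (A s * B).trace) (A' * B).trace t :=
  (LinearMap.toContinuousLinearMap
    ((traceLinearMap n 𝕜 𝕜).comp (LinearMap.mulRight 𝕜 B))).hasFDerivAt.comp_hasDerivAt t hA

end MatrixCurve

section LogDetDivergence

variable {n : Type*} [Fintype n] [DecidableEq n]

/-- The Bregman divergence `D_F(L‖M)` of `F = -log det`. -/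
noncomputable def logDetDivergence (L M : Matrix n n ℝ) : ℝ :=
  Real.log (M.det / L.det) + (M⁻¹ * L).trace - Fintype.card n

theorem hasDerivAt_logDetDivergence {L : Matrix n n ℝ} (hL : IsUnit L.det)
    {A : ℝ → Matrix n n ℝ} {A' : Matrix n n ℝ} {t : ℝ} (hA : HasDerivAt A A' t)
    (ht : IsUnit (A t).det) :
    HasDerivAt (fun s => logDetDivergence L (A s)) ((A t)⁻¹ * A' * (A t)⁻¹ * (A t - L)).trace t := by
  have hlog : HasDerivAt (fun s => Real.log ((A s).det / L.det)) ((A t)⁻¹ * A').trace t := by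
    convert (hA.matrix_det.div_const L.det).log (div_ne_zero ht.ne_zero hL.ne_zero) using 1
    rw [adjugate_eq_det_smul_inv ht, smul_mul, trace_smul, smul_eq_mul]
    field_simp [ht.ne_zero, hL.ne_zero]
  refine ((hlog.add ((hA.matrix_inv ht).matrix_trace_mul_const L)).sub_const _).congr_deriv ?_
  rw [Matrix.mul_sub, trace_sub, nonsing_inv_mul_cancel_right _ _ ht, neg_mul, trace_neg,
    sub_eq_add_neg]

end LogDetDivergence

theorem bregman_logdet_deriv_NAL_general
    (γ : ℝ)
    (L : Matrix (Fin 4) (Fin 4) ℝ) (hL : IsUnit L.det)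
    (Lhat : ℝ → Matrix (Fin 4) (Fin 4) ℝ)
    (S : ℝ → Matrix (Fin 4) (Fin 4) ℝ)
    (hderiv : ∀ t, HasDerivAt Lhat ((1 / γ) • (Lhat t * S t * Lhat t)) t)
    (hinv : ∀ t, IsUnit (Lhat t).det) :
    ∀ t, HasDerivAt
      (fun s => Real.log ((Lhat s).det / L.det) + ((Lhat s)⁻¹ * L).trace - 4)
      ((1 / γ) * (S t * (Lhat t - L)).trace) t := by
  intro t
  have hconj : (Lhat t)⁻¹ * ((1 / γ) • (Lhat t * S t * Lhat t)) * (Lhat t)⁻¹ = (1 / γ) • S t := by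
    rw [Matrix.mul_smul, Matrix.smul_mul, Matrix.mul_assoc (Lhat t),
      nonsing_inv_mul_cancel_left _ _ (hinv t), mul_nonsing_inv_cancel_right _ _ (hinv t)]
  have h := hasDerivAt_logDetDivergence hL (hderiv t) (hinv t)
  rw [hconj, Matrix.smul_mul, trace_smul, smul_eq_mul] at h
  simpa [logDetDivergence] using h

/-- Under the natural adaptation law `L̂' = (1/γ) L̂ S L̂`, the Bregman
log-det divergence satisfies `d/dt D_F(L‖L̂) = (1/γ) tr(S (L̂ − L))`. -/
theorem bregman_logdet_deriv_NAL
    (γ : ℝ) (hγ : 0 < γ)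
    (L : Matrix (Fin 4) (Fin 4) ℝ) (hL : IsUnit L.det) (hLsymm : L.IsSymm)
    (Lhat : ℝ → Matrix (Fin 4) (Fin 4) ℝ)
    (S : ℝ → Matrix (Fin 4) (Fin 4) ℝ) (hS : ∀ t, (S t).IsSymm)
    (hderiv : ∀ t, HasDerivAt Lhat ((1 / γ) • (Lhat t * S t * Lhat t)) t)
    (hinv : ∀ t, IsUnit (Lhat t).det) :
    ∀ t, HasDerivAt
      (fun s => Real.log ((Lhat s).det / L.det) + ((Lhat s)⁻¹ * L).trace - 4)
      ((1 / γ) * (S t * (Lhat t - L)).trace) t :=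
  bregman_logdet_deriv_NAL_general γ L hL Lhat S hderiv hinv
end

section
/- Let υ = e_x' + ϑ_e e_x + ϑ_ψ ψ with ψ evolving by ψ' = Λψ + Γ_p e_x + Γ_v e_x' + Γ_f e_f and gains chosen per Γ_p = ϑ_ψ⁻¹(M_d⁻¹K_d + ϑ_ψΛϑ_ψ⁻¹ϑ_e), Γ_v = ϑ_ψ⁻¹(M_d⁻¹D_d − ϑ_e + ϑ_ψΛϑ_ψ⁻¹), Γ_f = ϑ_ψ⁻¹M_d⁻¹. If additionally the second-order impedance M_d e_x'' + D_d e_x' + K_d e_x = −e_f holds at all times, then υ' = ϑ_ψ Λ ϑ_ψ⁻¹ υ, i.e., the sliding surface obeys a linear homogeneous ODE. -/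
open Matrix

/-! With `C = ϑψ Λ ϑψ⁻¹`, so that `ϑψ Λ = C ϑψ`, the gains are chosen to make
`ϑψ ψ' = M_d⁻¹ (K_d e_x + D_d e_x' + e_f) + C υ - ϑe e_x'`. The impedance equation turns the
first term into `-e_x''`, hence `υ' = e_x'' + ϑe e_x' + ϑψ ψ' = C υ`. -/

theorem HasDerivAt.const_mulVec {𝕜 : Type*} [NontriviallyNormedField 𝕜] {m n : Type*}
    [Fintype n] (A : Matrix m n 𝕜) {f : 𝕜 → n → 𝕜} {f' : n → 𝕜} {x : 𝕜}
    (hf : HasDerivAt f f' x) : HasDerivAt (fun s => A *ᵥ f s) (A *ᵥ f') x :=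
  hasDerivAt_pi.2 fun i => by
    simpa only [mulVec, dotProduct] using
      HasDerivAt.fun_sum fun j _ => (hasDerivAt_pi.1 hf j).const_mul (A i j)

section SlidingSurface

variable {n : Type*} [Fintype n] [DecidableEq n] {K : Type*} [CommRing K]
  {Md Dd Kd ϑψ ϑe Λ : Matrix n n K}

theorem mulVec_pseudo_impedance_rhs (hϑψ : IsUnit ϑψ) (p x v f : n → K) :
    ϑψ *ᵥ (Λ *ᵥ p + (ϑψ⁻¹ * (Md⁻¹ * Kd + ϑψ * Λ * ϑψ⁻¹ * ϑe)) *ᵥ x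
        + (ϑψ⁻¹ * (Md⁻¹ * Dd - ϑe + ϑψ * Λ * ϑψ⁻¹)) *ᵥ v + (ϑψ⁻¹ * Md⁻¹) *ᵥ f)
      = Md⁻¹ *ᵥ (Kd *ᵥ x + Dd *ᵥ v + f) + (ϑψ * Λ * ϑψ⁻¹) *ᵥ (v + ϑe *ᵥ x + ϑψ *ᵥ p)
        - ϑe *ᵥ v := by
  have hdet := (isUnit_iff_isUnit_det ϑψ).mp hϑψ
  simp only [mulVec_add, mulVec_mulVec, mul_nonsing_inv_cancel_left _ _ hdet,
    nonsing_inv_mul_cancel_right _ _ hdet, add_mulVec, sub_mulVec]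
  abel

theorem inv_mulVec_eq_neg_of_impedance (hMd : IsUnit Md) {x v a f : n → K}
    (himp : Md *ᵥ a + Dd *ᵥ v + Kd *ᵥ x = -f) :
    Md⁻¹ *ᵥ (Kd *ᵥ x + Dd *ᵥ v + f) = -a := by
  have hf : Kd *ᵥ x + Dd *ᵥ v + f = Md *ᵥ (-a) := by
    rw [neg_eq_iff_eq_neg.mp himp.symm, mulVec_neg]
    abel
  rw [hf, mulVec_mulVec, nonsing_inv_mul _ ((isUnit_iff_isUnit_det Md).mp hMd), one_mulVec]

theorem sliding_surface_deriv_eq (hMd : IsUnit Md) (hϑψ : IsUnit ϑψ) {x v a p f : n → K}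
    (himp : Md *ᵥ a + Dd *ᵥ v + Kd *ᵥ x = -f) :
    a + ϑe *ᵥ v + ϑψ *ᵥ (Λ *ᵥ p + (ϑψ⁻¹ * (Md⁻¹ * Kd + ϑψ * Λ * ϑψ⁻¹ * ϑe)) *ᵥ x
        + (ϑψ⁻¹ * (Md⁻¹ * Dd - ϑe + ϑψ * Λ * ϑψ⁻¹)) *ᵥ v + (ϑψ⁻¹ * Md⁻¹) *ᵥ f)
      = (ϑψ * Λ * ϑψ⁻¹) *ᵥ (v + ϑe *ᵥ x + ϑψ *ᵥ p) := by
  rw [mulVec_pseudo_impedance_rhs hϑψ, inv_mulVec_eq_neg_of_impedance hMd himp]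
  abel

end SlidingSurface

theorem sliding_surface_linear_ode_general
    (Md Dd Kd ϑψ ϑe Λ : Matrix (Fin 6) (Fin 6) ℝ)
    (hMd : IsUnit Md) (hϑψ : IsUnit ϑψ)
    (Γp Γv Γf : Matrix (Fin 6) (Fin 6) ℝ)
    (hΓp : Γp = ϑψ⁻¹ * (Md⁻¹ * Kd + ϑψ * Λ * ϑψ⁻¹ * ϑe))
    (hΓv : Γv = ϑψ⁻¹ * (Md⁻¹ * Dd - ϑe + ϑψ * Λ * ϑψ⁻¹))
    (hΓf : Γf = ϑψ⁻¹ * Md⁻¹)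
    (ex ex' ex'' ψ ef : ℝ → (Fin 6 → ℝ))
    (hex : ∀ t, HasDerivAt ex (ex' t) t)
    (hex' : ∀ t, HasDerivAt ex' (ex'' t) t)
    (hψ : ∀ t, HasDerivAt ψ
      (Λ *ᵥ ψ t + Γp *ᵥ ex t + Γv *ᵥ ex' t + Γf *ᵥ ef t) t)
    (himp : ∀ t, Md *ᵥ ex'' t + Dd *ᵥ ex' t + Kd *ᵥ ex t = -ef t) :
    ∀ t, HasDerivAt (fun s => ex' s + ϑe *ᵥ ex s + ϑψ *ᵥ ψ s)
      ((ϑψ * Λ * ϑψ⁻¹) *ᵥ (ex' t + ϑe *ᵥ ex t + ϑψ *ᵥ ψ t)) t := by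
  intro t
  have hυ := ((hex' t).add ((hex t).const_mulVec ϑe)).add ((hψ t).const_mulVec ϑψ)
  subst hΓp hΓv hΓf
  rwa [sliding_surface_deriv_eq hMd hϑψ (himp t)] at hυ

/-- With the pseudo-impedance dynamics, the chosen gains, and the
second-order impedance holding at all times, the sliding surface
`υ = e_x' + ϑe e_x + ϑψ ψ` obeys the linear homogeneous ODE `υ' = ϑψ Λ ϑψ⁻¹ υ`. -/
theorem sliding_surface_linear_ode
    (Md Dd Kd ϑψ ϑe Λ : Matrix (Fin 6) (Fin 6) ℝ)
    (hMd : IsUnit Md) (hϑψ : IsUnit ϑψ)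
    (Γp Γv Γf : Matrix (Fin 6) (Fin 6) ℝ)
    (hΓp : Γp = ϑψ⁻¹ * (Md⁻¹ * Kd + ϑψ * Λ * ϑψ⁻¹ * ϑe))
    (hΓv : Γv = ϑψ⁻¹ * (Md⁻¹ * Dd - ϑe + ϑψ * Λ * ϑψ⁻¹))
    (hΓf : Γf = ϑψ⁻¹ * Md⁻¹)
    (ex ex' ex'' ψ ef : ℝ → (Fin 6 → ℝ))
    (hex : ∀ t, HasDerivAt ex (ex' t) t)
    (hex' : ∀ t, HasDerivAt ex' (ex'' t) t)
    (hef : Continuous ef)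
    (hψ : ∀ t, HasDerivAt ψ
      (Λ *ᵥ ψ t + Γp *ᵥ ex t + Γv *ᵥ ex' t + Γf *ᵥ ef t) t)
    (himp : ∀ t, Md *ᵥ ex'' t + Dd *ᵥ ex' t + Kd *ᵥ ex t = -ef t) :
    ∀ t, HasDerivAt (fun s => ex' s + ϑe *ᵥ ex s + ϑψ *ᵥ ψ s)
      ((ϑψ * Λ * ϑψ⁻¹) *ᵥ (ex' t + ϑe *ᵥ ex t + ϑψ *ᵥ ψ t)) t :=
  sliding_surface_linear_ode_general Md Dd Kd ϑψ ϑe Λ hMd hϑψ Γp Γv Γf hΓp hΓv hΓf ex ex' ex'' ψ ef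
    hex hex' hψ himp
end
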